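/- arXiv:1103.6069 — 9 statements merged into one kernel-verified Lean document; each statement's English description precedes it below -/
import Mathlib

section
/- Let G be a finite transitive permutation group with point stabiliser H, let T be a normal subgroup of G, and let g ∈ G. If a positive integer k divides |T ∩ H : T ∩ H ∩ H^g|, then k divides |H : H ∩ H^g|. -/
/-!
For a normal subgroup `N` and any subgroup `K`, the orbits of `N` and of `N ⊔ K = N K` through
the base point of `G ⧸ K` coincide, so `|N : N ∩ K| = |N K : K|`, which divides `|G : K|`.
Inside `H`, the subgroup `T ∩ H` is normal, and taking `K = H ∩ H^g` gives the claim.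
-/

/-- The conjugate subgroup `H^g = g⁻¹ H g`. -/
def conjSubgroup {G : Type*} [Group G] (g : G) (H : Subgroup G) : Subgroup G :=
  H.map (MulAut.conj g⁻¹).toMonoidHom

namespace Subgroup

variable {G : Type*} [Group G]

theorem relIndex_eq_ncard_orbit (K L : Subgroup G) :
    K.relIndex L = (MulAction.orbit L ((1 : G) : G ⧸ K)).ncard := by
  rw [relIndex, ← MulAction.index_stabilizer]
  congr
  ext x
  simp [mem_subgroupOf, MulAction.compHom_smul_def, QuotientGroup.eq]

theorem relIndex_normal_sup_left (K N : Subgroup G) [N.Normal] :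
    K.relIndex (N ⊔ K) = K.relIndex N := by
  rw [relIndex_eq_ncard_orbit, relIndex_eq_ncard_orbit]
  congr 1
  ext x
  constructor
  · rintro ⟨⟨y, hy⟩, rfl⟩
    obtain ⟨n, hn, k, hk, rfl⟩ := Set.mem_mul.mp ((normal_mul N K).subset hy)
    exact ⟨⟨n, hn⟩, by simpa [MulAction.compHom_smul_def, QuotientGroup.eq] using hk⟩
  · rintro ⟨⟨n, hn⟩, rfl⟩
    exact ⟨⟨n, mem_sup_left hn⟩, rfl⟩

theorem relIndex_dvd_index_of_normal_right (K N : Subgroup G) [N.Normal] :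
    K.relIndex N ∣ K.index :=
  relIndex_normal_sup_left K N ▸ relIndex_dvd_index_of_le le_sup_right

theorem relIndex_inf_dvd_relIndex_of_normal_left (K T L : Subgroup G) [T.Normal] :
    K.relIndex (T ⊓ L) ∣ K.relIndex L := by
  rw [← relIndex_subgroupOf inf_le_right, inf_subgroupOf_right]
  exact relIndex_dvd_index_of_normal_right _ _

end Subgroup

theorem stmt2_general {G Ω : Type*} [Group G] [MulAction G Ω] (α : Ω)
    (T : Subgroup G) (hT : T.Normal) (g : G) (k : ℕ)
    (hdvd : k ∣ Subgroup.relIndex (conjSubgroup g (MulAction.stabilizer G α))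
      (T ⊓ MulAction.stabilizer G α)) :
    k ∣ Subgroup.relIndex (conjSubgroup g (MulAction.stabilizer G α))
      (MulAction.stabilizer G α) :=
  hdvd.trans (Subgroup.relIndex_inf_dvd_relIndex_of_normal_left _ _ _)

/-- Let `G` be a finite transitive permutation group with point stabiliser `H`,
`T` a normal subgroup of `G`, and `g ∈ G`.  If `k > 0` divides
`|T ∩ H : T ∩ H ∩ H^g|`, then `k` divides `|H : H ∩ H^g|`. -/
theorem stmt2 {G Ω : Type*} [Group G] [Finite G] [Finite Ω] [MulAction G Ω]
    [FaithfulSMul G Ω] (htrans : MulAction.IsPretransitive G Ω) (α : Ω)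
    (T : Subgroup G) (hT : T.Normal) (g : G) (k : ℕ) (hk : 0 < k)
    (hdvd : k ∣ Subgroup.relIndex (conjSubgroup g (MulAction.stabilizer G α))
      (T ⊓ MulAction.stabilizer G α)) :
    k ∣ Subgroup.relIndex (conjSubgroup g (MulAction.stabilizer G α))
      (MulAction.stabilizer G α) :=
  stmt2_general α T hT g k hdvd
end

section
/- Let G be a finite transitive permutation group on Ω with point stabiliser H, and let p be a prime such that H has a nontrivial normal p-subgroup P. Then G has a subdegree divisible by p. -/
/-! The normal `p`-subgroup `P` of `H = G_α` acts on every `H`-orbit. If no subdegree were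
divisible by `p`, then `P` would fix a point of each `H`-orbit; since `P` is normal in `H`
its fixed points form an `H`-invariant set, so `P` would fix every point of `Ω`, contradicting
faithfulness. -/

open MulAction

theorem IsPGroup.smul_eq_of_not_dvd_card_orbit {H X : Type*} [Group H] [MulAction H X]
    {p : ℕ} [Fact p.Prime] {Q : Subgroup H} [Q.Normal] (hQ : IsPGroup p Q) (x : X)
    (hx : ¬ p ∣ Nat.card (orbit H x)) {q : H} (hq : q ∈ Q) : q • x = x := by
  obtain ⟨⟨_, h, rfl⟩, hfix⟩ := hQ.nonempty_fixed_point_of_prime_not_dvd_card (orbit H x) hx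
  have hconj : h * q * h⁻¹ ∈ Q := Subgroup.Normal.conj_mem inferInstance q hq h
  have : (h * q * h⁻¹) • h • x = h • x := congrArg Subtype.val (hfix ⟨_, hconj⟩)
  rw [smul_smul, inv_mul_cancel_right, mul_smul] at this
  exact smul_left_cancel h this

theorem stmt3_general {G Ω : Type*} [Group G] [MulAction G Ω]
    [FaithfulSMul G Ω] (α : Ω)
    (p : ℕ) (hp : p.Prime) (P : Subgroup G)
    (hPle : P ≤ MulAction.stabilizer G α) (hPbot : P ≠ ⊥)
    (hPnorm : (P.subgroupOf (MulAction.stabilizer G α)).Normal)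
    (hPp : IsPGroup p P) :
    ∃ β : Ω, p ∣ Nat.card (MulAction.orbit (MulAction.stabilizer G α) β) := by
  have : Fact p.Prime := ⟨hp⟩
  by_contra! hcoprime
  have hQp : IsPGroup p (P.subgroupOf (stabilizer G α)) :=
    hPp.of_equiv (Subgroup.subgroupOfEquivOfLe hPle).symm
  refine hPbot ((Subgroup.eq_bot_iff_forall P).2 fun g hg ↦ ?_)
  refine FaithfulSMul.eq_of_smul_eq_smul fun β : Ω ↦ ?_
  rw [one_smul]
  exact hQp.smul_eq_of_not_dvd_card_orbit β (hcoprime β)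
    (q := ⟨g, hPle hg⟩) (Subgroup.mem_subgroupOf.2 hg)

/-- Let `G` be a finite transitive permutation group on `Ω` with point stabiliser
`H = G_α`, and `p` a prime such that `H` has a nontrivial normal `p`-subgroup `P`.
Then `G` has a subdegree divisible by `p`. -/
theorem stmt3 {G Ω : Type*} [Group G] [Finite G] [Finite Ω] [MulAction G Ω]
    [FaithfulSMul G Ω] (htrans : MulAction.IsPretransitive G Ω) (α : Ω)
    (p : ℕ) (hp : p.Prime) (P : Subgroup G)
    (hPle : P ≤ MulAction.stabilizer G α) (hPbot : P ≠ ⊥)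
    (hPnorm : (P.subgroupOf (MulAction.stabilizer G α)).Normal)
    (hPp : IsPGroup p P) :
    ∃ β : Ω, p ∣ Nat.card (MulAction.orbit (MulAction.stabilizer G α) β) :=
  stmt3_general α p hp P hPle hPbot hPnorm hPp
end

section
/- Let G be a finite transitive permutation group with point stabiliser H, let p be a prime, and suppose there exists a subgroup T ≤ H such that: (i) N_G(T) is not contained in H; and (ii) for every Sylow p-subgroup S of H, the subgroup ⟨T, S⟩ contains a normal subgroup H₀ of H which is weakly closed in G (meaning: whenever H₀^g ≤ H for g ∈ G, there exists h ∈ H with H₀^g = H₀^h) and satisfies H = N_G(H₀). Then G has a subdegree divisible by p. -/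
/-- `S` is a Sylow `p`-subgroup of the subgroup `H` of `G`. -/
def IsSylowIn {G : Type*} [Group G] (p : ℕ) (S H : Subgroup G) : Prop :=
  S ≤ H ∧ IsPGroup p S ∧ ∀ Q : Subgroup G, Q ≤ H → IsPGroup p Q → S ≤ Q → Q = S

/-- `H₀ ≤ H` is weakly closed in `G` (relative to `H`): every `G`-conjugate of `H₀`
contained in `H` is an `H`-conjugate of `H₀`. -/
def IsWeaklyClosedIn {G : Type*} [Group G] (H₀ H : Subgroup G) : Prop :=
  ∀ g : G, conjSubgroup g H₀ ≤ H → ∃ h ∈ H, conjSubgroup g H₀ = conjSubgroup h H₀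

/-!
Suppose every subdegree is prime to `p`, and pick `g ∈ N_G(T) \ H`. Then `T ≤ H^g`, the
stabiliser of `g⁻¹ • α`, and `|H : H ∩ H^g|` is a subdegree, so a Sylow `p`-subgroup `S` of
`H ∩ H^g` is Sylow in `H`. The corresponding `H₀ ≤ ⟨T, S⟩ ≤ H^g` has `H₀^{g⁻¹} ≤ H`; weak closure
and `N_G(H₀) = H` force `H₀^{g⁻¹} = H₀`, i.e. `g ∈ N_G(H₀) = H`, a contradiction.
-/

open MulAction

section conjSubgroup

variable {G : Type*} [Group G]

lemma mem_conjSubgroup {g x : G} {H : Subgroup G} :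
    x ∈ conjSubgroup g H ↔ g * x * g⁻¹ ∈ H := by
  simp only [conjSubgroup, Subgroup.mem_map, MulEquiv.coe_toMonoidHom, MulAut.conj_apply]
  constructor
  · rintro ⟨y, hy, rfl⟩
    simpa [mul_assoc] using hy
  · exact fun h ↦ ⟨g * x * g⁻¹, h, by group⟩

lemma conjSubgroup_mono {g : G} {A B : Subgroup G} (h : A ≤ B) :
    conjSubgroup g A ≤ conjSubgroup g B :=
  Subgroup.map_mono h

lemma conjSubgroup_eq_self_iff {g : G} {H : Subgroup G} :
    conjSubgroup g H = H ↔ g ∈ Subgroup.normalizer (H : Set G) := by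
  simp only [Subgroup.ext_iff, mem_conjSubgroup, Subgroup.mem_normalizer_iff, Iff.comm]

lemma conjSubgroup_inv_le_iff {g : G} {A B : Subgroup G} :
    conjSubgroup g⁻¹ A ≤ B ↔ A ≤ conjSubgroup g B := by
  refine ⟨fun h x hx ↦ mem_conjSubgroup.2 (h (mem_conjSubgroup.2 ?_)),
    fun h x hx ↦ ?_⟩
  · simpa [mul_assoc] using hx
  · simpa [mul_assoc] using mem_conjSubgroup.1 (h (mem_conjSubgroup.1 hx))

lemma stabilizer_inv_smul_eq_conjSubgroup {Ω : Type*} [MulAction G Ω] (g : G) (α : Ω) :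
    stabilizer G (g⁻¹ • α) = conjSubgroup g (stabilizer G α) :=
  stabilizer_smul_eq_stabilizer_map_conj g⁻¹ α

lemma IsWeaklyClosedIn.mem_of_conjSubgroup_le {H₀ H : Subgroup G} (hwc : IsWeaklyClosedIn H₀ H)
    (hN : Subgroup.normalizer (H₀ : Set G) = H) {g : G} (hg : conjSubgroup g H₀ ≤ H) : g ∈ H := by
  obtain ⟨h, hh, heq⟩ := hwc g hg
  rw [← hN] at hh ⊢
  rwa [conjSubgroup_eq_self_iff.2 hh, conjSubgroup_eq_self_iff] at heq

end conjSubgroup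

section Sylow

variable {G : Type*} [Group G] {p : ℕ}

lemma Sylow.isSylowIn_map_subtype {H : Subgroup G} (P : Sylow p H) :
    IsSylowIn p (P.map H.subtype) H := by
  refine ⟨Subgroup.map_subtype_le _, P.isPGroup'.map _, fun Q hQH hQ hPQ ↦ ?_⟩
  have hPQ' : (P : Subgroup H) ≤ Q.subgroupOf H := fun x hx ↦ hPQ ⟨x, hx, rfl⟩
  rw [← P.is_maximal' hQ.comap_subtype hPQ',
    Subgroup.map_comap_eq_self (by rwa [Subgroup.range_subtype])]

lemma exists_isSylowIn_le_of_not_dvd_index [Finite G] [Fact p.Prime] {H K : Subgroup G}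
    (hK : ¬ p ∣ (K.subgroupOf H).index) : ∃ S, IsSylowIn p S H ∧ S ≤ K := by
  obtain ⟨P₀⟩ : Nonempty (Sylow p (K.subgroupOf H)) := inferInstance
  have hP : IsPGroup p (P₀.map (K.subgroupOf H).subtype) := P₀.isPGroup'.map _
  have hindex : ¬ p ∣ (P₀.map (K.subgroupOf H).subtype).index := by
    rw [Subgroup.index_map_subtype]
    exact Nat.Prime.not_dvd_mul Fact.out P₀.not_dvd_index hK
  refine ⟨_, (hP.toSylow hindex).isSylowIn_map_subtype, ?_⟩
  rintro _ ⟨_, ⟨x, hx, rfl⟩, rfl⟩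
  exact x.2

end Sylow

lemma index_subgroupOf_stabilizer {G Ω : Type*} [Group G] [MulAction G Ω] (H : Subgroup G)
    (β : Ω) : ((stabilizer G β).subgroupOf H).index = Nat.card (orbit H β) := by
  rw [Nat.card_coe_set_eq, ← index_stabilizer H β]
  rfl

theorem stmt4_general {G Ω : Type*} [Group G] [Finite G] [MulAction G Ω] (α : Ω)
    (p : ℕ) (hp : p.Prime) (T : Subgroup G) (hTH : T ≤ MulAction.stabilizer G α)
    (hnorm : ¬ Subgroup.normalizer (T : Set G) ≤ MulAction.stabilizer G α)
    (hS : ∀ S : Subgroup G, IsSylowIn p S (MulAction.stabilizer G α) →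
      ∃ H₀ : Subgroup G, H₀ ≤ T ⊔ S ∧
        (H₀.subgroupOf (MulAction.stabilizer G α)).Normal ∧
        IsWeaklyClosedIn H₀ (MulAction.stabilizer G α) ∧
        Subgroup.normalizer (H₀ : Set G) = MulAction.stabilizer G α) :
    ∃ β : Ω, p ∣ Nat.card (MulAction.orbit (MulAction.stabilizer G α) β) := by
  have : Fact p.Prime := ⟨hp⟩
  by_contra! hcoprime
  obtain ⟨g, hgT, hgH⟩ := Set.not_subset.1 hnorm
  have hTK : T ≤ conjSubgroup g (stabilizer G α) :=
    conjSubgroup_eq_self_iff.2 hgT ▸ conjSubgroup_mono hTH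
  have hindex : ¬ p ∣ ((stabilizer G (g⁻¹ • α)).subgroupOf (stabilizer G α)).index := by
    rw [index_subgroupOf_stabilizer]
    exact hcoprime (g⁻¹ • α)
  obtain ⟨S, hSyl, hSK⟩ := exists_isSylowIn_le_of_not_dvd_index hindex
  rw [stabilizer_inv_smul_eq_conjSubgroup] at hSK
  obtain ⟨H₀, hH₀TS, -, hwc, hN⟩ := hS S hSyl
  have hH₀ : conjSubgroup g⁻¹ H₀ ≤ stabilizer G α :=
    conjSubgroup_inv_le_iff.2 (hH₀TS.trans (sup_le hTK hSK))
  exact hgH ((stabilizer G α).inv_mem_iff.1 (hwc.mem_of_conjSubgroup_le hN hH₀))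

/-- Lemma 2.2 of the paper: a criterion for a transitive group to have a subdegree
divisible by the prime `p`. -/
theorem stmt4 {G Ω : Type*} [Group G] [Finite G] [Finite Ω] [MulAction G Ω]
    [FaithfulSMul G Ω] (htrans : MulAction.IsPretransitive G Ω) (α : Ω)
    (p : ℕ) (hp : p.Prime) (T : Subgroup G) (hTH : T ≤ MulAction.stabilizer G α)
    (hnorm : ¬ Subgroup.normalizer (T : Set G) ≤ MulAction.stabilizer G α)
    (hS : ∀ S : Subgroup G, IsSylowIn p S (MulAction.stabilizer G α) →
      ∃ H₀ : Subgroup G, H₀ ≤ T ⊔ S ∧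
        (H₀.subgroupOf (MulAction.stabilizer G α)).Normal ∧
        IsWeaklyClosedIn H₀ (MulAction.stabilizer G α) ∧
        Subgroup.normalizer (H₀ : Set G) = MulAction.stabilizer G α) :
    ∃ β : Ω, p ∣ Nat.card (MulAction.orbit (MulAction.stabilizer G α) β) :=
  stmt4_general α p hp T hTH hnorm hS
end

section
/- Let T be a finite nonabelian simple group and p a prime dividing |T|. Then T has a conjugacy class of size divisible by p. -/
/-!
Suppose `p` divides no class size, and fix a Sylow `p`-subgroup `P`. For every `t`, the centralizer
of `t` has index prime to `p`, so it contains a conjugate of `P`; hence `t` is conjugate into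
`C(P)`. A proper subgroup of a finite group never meets every conjugacy class (Jordan's theorem
on fixed-point-free elements, applied to the action on its cosets), so `C(P)` is the whole group
and `P` is central. The centre of a nonabelian simple group is trivial, so `P = 1` and `p ∤ |T|`.
-/

open MulAction Subgroup

theorem MulAction.exists_forall_smul_ne {G X : Type*} [Group G] [MulAction G X] [Finite G]
    [Finite X] [IsPretransitive G X] (hX : 1 < Nat.card X) : ∃ g : G, ∀ x : X, g • x ≠ x := by
  classical
  cases nonempty_fintype G
  cases nonempty_fintype X
  by_contra! hfix
  have horbits : Fintype.card (Quotient (orbitRel G X)) ≤ 1 :=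
    Fintype.card_le_one_iff_subsingleton.mpr <|
      (pretransitive_iff_subsingleton_quotient G X).mp inferInstance
  have hburnside := sum_card_fixedBy_eq_card_orbits_mul_card_group G X
  -- every element fixes a point, and the identity fixes at least two
  have : Fintype.card G < ∑ g : G, Fintype.card (fixedBy X g) :=
    calc Fintype.card G = ∑ _g : G, 1 := by simp
      _ < ∑ g : G, Fintype.card (fixedBy X g) := by
        refine Finset.sum_lt_sum (fun g _ ↦ ?_) ⟨1, Finset.mem_univ _, ?_⟩
        · obtain ⟨x, hx⟩ := hfix g
          exact Fintype.card_pos_iff.mpr ⟨⟨x, hx⟩⟩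
        · simpa [fixedBy_one_eq_univ, Fintype.card_congr (Equiv.Set.univ X),
            ← Nat.card_eq_fintype_card] using hX
  have := Nat.mul_le_mul_right (Fintype.card G) horbits
  omega

theorem Subgroup.eq_top_of_forall_exists_isConj_mem {G : Type*} [Group G] [Finite G]
    {H : Subgroup G} (hH : ∀ g : G, ∃ k ∈ H, IsConj g k) : H = ⊤ := by
  by_contra hne
  obtain ⟨g, hg⟩ := exists_forall_smul_ne (G := G) (X := G ⧸ H) (one_lt_index_of_ne_top hne)
  obtain ⟨k, hk, hgk⟩ := hH g
  obtain ⟨x, rfl⟩ := isConj_iff.mp hgk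
  refine hg (x⁻¹ : G) (QuotientGroup.eq.mpr ?_)
  simpa [mul_assoc] using H.inv_mem hk

theorem card_conjugatesOf_eq_index_centralizer {G : Type*} [Group G] (g : G) :
    Nat.card (conjugatesOf g) = (centralizer {g}).index := by
  calc Nat.card (conjugatesOf g) = (stabilizer (ConjAct G) g).index := by
        rw [index_stabilizer, ← Nat.card_coe_set_eq]
        congr 2
        ext h
        exact (ConjAct.mem_orbit_conjAct.trans isConj_comm).symm
    _ = (centralizer {g}).index := by
        rw [centralizer_eq_comap_stabilizer]
        exact (index_comap_of_surjective _ ConjAct.toConjAct.surjective).symm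

namespace Sylow

variable {G : Type*} [Group G] [Finite G] {p : ℕ} [Fact p.Prime]

theorem exists_le_of_not_dvd_index {H : Subgroup G} (hH : ¬ p ∣ H.index) :
    ∃ P : Sylow p G, ↑P ≤ H := by
  obtain ⟨Q⟩ : Nonempty (Sylow p H) := inferInstance
  have hQ : ¬ p ∣ (Q.map H.subtype).index := by
    rw [index_map_subtype]
    exact Nat.Prime.not_dvd_mul Fact.out Q.not_dvd_index hH
  exact ⟨(Q.2.map H.subtype).toSylow hQ, map_subtype_le _⟩

theorem exists_isConj_mem_centralizer (P : Sylow p G) {g : G}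
    (hg : ¬ p ∣ Nat.card (conjugatesOf g)) : ∃ k ∈ centralizer (P : Set G), IsConj g k := by
  rw [card_conjugatesOf_eq_index_centralizer] at hg
  obtain ⟨Q, hQ⟩ := exists_le_of_not_dvd_index hg
  obtain ⟨x, rfl⟩ := exists_smul_eq G Q P
  refine ⟨x * g * x⁻¹, fun y hy ↦ ?_, isConj_iff.mpr ⟨x, rfl⟩⟩
  have hy' : x⁻¹ * y * x ∈ Q := by
    simpa [Sylow.coe_smul, Set.mem_smul_set_iff_inv_smul_mem] using hy
  have hcomm := mem_centralizer_iff.mp (hQ hy') g rfl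
  calc y * (x * g * x⁻¹) = x * ((x⁻¹ * y * x) * g) * x⁻¹ := by group
    _ = x * (g * (x⁻¹ * y * x)) * x⁻¹ := by rw [hcomm]
    _ = x * g * x⁻¹ * y := by group

theorem le_center_of_forall_not_dvd_card_conjugatesOf
    (h : ∀ g : G, ¬ p ∣ Nat.card (conjugatesOf g)) (P : Sylow p G) : ↑P ≤ center G :=
  centralizer_eq_top_iff_subset.mp <|
    eq_top_of_forall_exists_isConj_mem fun g ↦ P.exists_isConj_mem_centralizer (h g)

end Sylow

theorem IsSimpleGroup.center_eq_bot {G : Type*} [Group G] [IsSimpleGroup G]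
    (h : ∃ a b : G, a * b ≠ b * a) : center G = ⊥ := by
  refine (inferInstance : (center G).Normal).eq_bot_or_eq_top.resolve_right fun htop ↦ ?_
  obtain ⟨a, b, hab⟩ := h
  exact hab (mem_center_iff.mp (htop ▸ mem_top a) b).symm

/-- Lemma 3.3: a finite nonabelian simple group `T` has, for every prime `p`
dividing `|T|`, a conjugacy class of size divisible by `p`. -/
theorem stmt7 {T : Type*} [Group T] [Finite T] [IsSimpleGroup T]
    (hna : ∃ a b : T, a * b ≠ b * a) (p : ℕ) (hp : p.Prime)
    (hdvd : p ∣ Nat.card T) :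
    ∃ t : T, p ∣ Nat.card (conjugatesOf t) := by
  have : Fact p.Prime := ⟨hp⟩
  by_contra! h
  obtain ⟨P⟩ : Nonempty (Sylow p T) := inferInstance
  have hP : (P : Subgroup T) = ⊥ := by
    rw [← le_bot_iff, ← IsSimpleGroup.center_eq_bot hna]
    exact P.le_center_of_forall_not_dvd_card_conjugatesOf h
  exact P.not_dvd_index (by rwa [hP, index_bot])
end

section
/- Let G = A_n or S_n with n ≥ 5 act naturally on the set of k-element subsets of {1,…,n}, where 1 ≤ k < n/2. Then G is 3/2-transitive (all nontrivial suborbits have equal size > 1) if and only if either k = 1, or (n, k) = (7, 2). -/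
/-!
The stabiliser of a `k`-set `α` in `Aₙ` already has the sets `{β : |β ∩ α| = i}` as its orbits:
a permutation fixing `α` and carrying `β` to `β'` exists as soon as the four cells cut out by
`α, β` and by `α, β'` have the same sizes, and since `n ≥ 5` two points lie in a common cell, so
composing with their transposition makes it even. The nontrivial suborbits therefore have sizes
`C(k, i) C(n - k, k - i)` for `0 ≤ i < k`. For `k ≥ 2`, comparing `i = k - 1` with `i = k - 2`
gives `(k - 1)(n - k - 1) = 4`, which together with `n - k > k` forces `k = 2`, `n = 7`.
-/

open Pointwise

/-- A transitive permutation group is `3/2`-transitive if all orbits of a point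
stabiliser on the points different from the fixed point have the same size,
this size being greater than 1. -/
def IsThreeHalvesTransitive (G Ω : Type*) [Group G] [MulAction G Ω] : Prop :=
  MulAction.IsPretransitive G Ω ∧ ∀ α : Ω, ∃ s : ℕ, 1 < s ∧
    ∀ β : Ω, β ≠ α → Nat.card (MulAction.orbit (MulAction.stabilizer G α) β) = s

/-- The natural action of `Sym(n)` on the `k`-element subsets of `{1, …, n}`. -/
instance ksetAction (n k : ℕ) :
    MulAction (Equiv.Perm (Fin n)) {s : Finset (Fin n) // s.card = k} where
  smul g s := ⟨g • s.1, by rw [Finset.card_smul_finset]; exact s.2⟩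
  one_smul s := Subtype.ext (one_smul _ s.1)
  mul_smul g h s := Subtype.ext (mul_smul g h s.1)

open Equiv Finset

section Perm

variable {X Y : Type*} [Fintype X]

theorem Equiv.Perm.exists_comp_eq_of_card_fiber_eq [DecidableEq Y] (f f' : X → Y)
    (h : ∀ y, Fintype.card {x // f x = y} = Fintype.card {x // f' x = y}) :
    ∃ g : Perm X, f' ∘ g = f :=
  ⟨.ofFiberEquiv fun y => Fintype.equivOfCardEq (h y), funext (ofFiberEquiv_map _)⟩

theorem Equiv.Perm.exists_sign_eq_neg_one_comp_eq [DecidableEq X] [Fintype Y] (f : X → Y)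
    (h : Fintype.card Y < Fintype.card X) : ∃ τ : Perm X, sign τ = -1 ∧ f ∘ τ = f := by
  obtain ⟨x, y, hxy, hf⟩ := Fintype.exists_ne_map_eq_of_card_lt f h
  exact ⟨swap x y, sign_swap hxy, funext (apply_swap_eq_self hf)⟩

theorem Equiv.Perm.exists_mem_alternatingGroup_comp_eq [DecidableEq X] [Fintype Y] [DecidableEq Y]
    (f f' : X → Y) (hY : Fintype.card Y < Fintype.card X)
    (h : ∀ y, Fintype.card {x // f x = y} = Fintype.card {x // f' x = y}) :
    ∃ g ∈ alternatingGroup X, f' ∘ g = f := by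
  obtain ⟨g, hg⟩ := exists_comp_eq_of_card_fiber_eq f f' h
  obtain ⟨τ, hτ, hfτ⟩ := exists_sign_eq_neg_one_comp_eq f hY
  rcases Int.units_eq_one_or (sign g) with hs | hs
  · exact ⟨g, mem_alternatingGroup.2 hs, hg⟩
  · refine ⟨g * τ, mem_alternatingGroup.2 (by simp [hs, hτ]), ?_⟩
    rw [coe_mul, ← Function.comp_assoc, hg, hfτ]

end Perm

theorem Equiv.Perm.smul_finset_eq_of_forall_mem_iff {X : Type*} [DecidableEq X] {g : Perm X}
    {s t : Finset X} (h : ∀ x, g x ∈ t ↔ x ∈ s) : g • s = t := by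
  ext y
  rw [← inv_smul_mem_iff, ← h, Perm.smul_def, Perm.coe_inv, apply_symm_apply]

section Finset

variable {X : Type*} [Fintype X] [DecidableEq X]

theorem Finset.card_fiber_mem_pair_eq {α β β' : Finset X} (hβ : #β = #β')
    (hi : #(β ∩ α) = #(β' ∩ α)) (c : Bool × Bool) :
    Fintype.card {x // (decide (x ∈ α), decide (x ∈ β)) = c} =
      Fintype.card {x // (decide (x ∈ α), decide (x ∈ β')) = c} := by
  have e₁ (γ : Finset X) : #{x | x ∈ α ∧ x ∈ γ} = #(γ ∩ α) := by
    congr 1; ext; simp [and_comm]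
  have e₂ (γ : Finset X) : #{x | x ∈ α ∧ x ∉ γ} = #α - #(γ ∩ α) := by
    rw [← card_sdiff]; congr 1; ext; simp
  have e₃ (γ : Finset X) : #{x | x ∉ α ∧ x ∈ γ} = #γ - #(γ ∩ α) := by
    rw [inter_comm, ← card_sdiff]; congr 1; ext; simp [and_comm]
  have e₄ (γ : Finset X) : #{x | x ∉ α ∧ x ∉ γ} = Fintype.card X - (#α + #γ - #(γ ∩ α)) := by
    rw [inter_comm, ← card_union, ← card_compl]; congr 1; ext; simp
  rcases c with ⟨_ | _, _ | _⟩ <;>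
    simp only [Fintype.card_subtype, Prod.mk.injEq, decide_eq_true_iff,
      decide_eq_false_iff_not, e₁, e₂, e₃, e₄, hβ, hi]

theorem Finset.exists_mem_alternatingGroup_smul_eq_smul_eq (hX : 5 ≤ Fintype.card X)
    {α β β' : Finset X} (hβ : #β = #β') (hi : #(β ∩ α) = #(β' ∩ α)) :
    ∃ g ∈ alternatingGroup X, g • α = α ∧ g • β = β' := by
  obtain ⟨g, hgA, hg⟩ := Perm.exists_mem_alternatingGroup_comp_eq
    (fun x => (decide (x ∈ α), decide (x ∈ β))) (fun x => (decide (x ∈ α), decide (x ∈ β')))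
    (by rw [Fintype.card_prod, Fintype.card_bool]; omega) (card_fiber_mem_pair_eq hβ hi)
  have hmem x : (g x ∈ α ↔ x ∈ α) ∧ (g x ∈ β' ↔ x ∈ β) := by
    simpa using congrFun hg x
  exact ⟨g, hgA, Perm.smul_finset_eq_of_forall_mem_iff fun x => (hmem x).1,
    Perm.smul_finset_eq_of_forall_mem_iff fun x => (hmem x).2⟩

theorem Finset.card_filter_card_eq_and_card_inter_eq {α : Finset X} {k i : ℕ} (hi : i ≤ k) :
    #{s : Finset X | #s = k ∧ #(s ∩ α) = i} =
      (#α).choose i * (Fintype.card X - #α).choose (k - i) := by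
  rw [← card_compl, ← card_powersetCard, ← card_powersetCard, ← card_product]
  refine card_nbij' (fun s => (s ∩ α, s \ α)) (fun p => p.1 ∪ p.2) ?_ ?_ ?_ ?_
  · intro s hs
    simp only [mem_coe, mem_filter, mem_univ, true_and] at hs
    simp only [mem_coe, mem_product, mem_powersetCard]
    refine ⟨⟨inter_subset_right, hs.2⟩, fun x hx => by simp_all, ?_⟩
    rw [card_sdiff, inter_comm, hs.1, hs.2]
  · rintro ⟨t, u⟩ htu
    simp only [mem_coe, mem_product, mem_powersetCard, subset_compl_iff_disjoint_right] at htu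
    obtain ⟨⟨htα, ht⟩, huα, hu⟩ := htu
    simp only [mem_coe, mem_filter, mem_univ, true_and,
      card_union_of_disjoint (huα.mono_right htα).symm, union_inter_distrib_right,
      inter_eq_left.2 htα, disjoint_iff_inter_eq_empty.1 huα, union_empty]
    omega
  · intro s _
    show s ∩ α ∪ s \ α = s
    rw [union_comm, sdiff_union_inter]
  · rintro ⟨t, u⟩ htu
    simp only [mem_coe, mem_product, mem_powersetCard, subset_compl_iff_disjoint_right] at htu
    obtain ⟨⟨htα, -⟩, huα, -⟩ := htu
    show ((t ∪ u) ∩ α, (t ∪ u) \ α) = (t, u)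
    rw [union_inter_distrib_right, inter_eq_left.2 htα, disjoint_iff_inter_eq_empty.1 huα,
      union_empty, union_sdiff_distrib, sdiff_eq_empty_iff_subset.2 htα,
      sdiff_eq_self_of_disjoint huα, empty_union]

theorem Finset.exists_card_eq_and_card_inter_eq (α : Finset X) {k i : ℕ} (hi : i ≤ k)
    (hki : k - i ≤ Fintype.card X - #α) (hiα : i ≤ #α) :
    ∃ s : Finset X, #s = k ∧ #(s ∩ α) = i := by
  have hpos : 0 < #{s : Finset X | #s = k ∧ #(s ∩ α) = i} := by
    rw [card_filter_card_eq_and_card_inter_eq hi]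
    exact Nat.mul_pos (Nat.choose_pos hiα) (Nat.choose_pos hki)
  obtain ⟨s, hs⟩ := card_pos.1 hpos
  exact ⟨s, by simpa using hs⟩

end Finset

theorem exists_forall_choose_mul_choose_eq_iff {n k : ℕ} (hk1 : 1 ≤ k) (hk2 : 2 * k < n) :
    (∃ s, 1 < s ∧ ∀ i < k, k.choose i * (n - k).choose (k - i) = s) ↔
      k = 1 ∨ (n = 7 ∧ k = 2) := by
  constructor
  · rintro ⟨s, -, hs⟩
    rcases (by omega : k = 1 ∨ 2 ≤ k) with rfl | hk
    · exact Or.inl rfl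
    obtain ⟨a, rfl⟩ := Nat.exists_eq_add_of_le' hk
    obtain ⟨c, rfl⟩ : ∃ c, n = a + 2 + (c + 1) := ⟨n - (a + 2) - 1, by omega⟩
    have h₁ : (a + 2) * (c + 1) = s := by simpa using hs (a + 1) (by omega)
    have h₂ : (a + 2).choose 2 * (c + 1).choose 2 = s := by
      simpa [← Nat.choose_symm_add] using hs a (by omega)
    have e₁ : (a + 2) * (a + 1) = (a + 2).choose 2 * 2 := by
      simpa using Nat.add_one_mul_choose_eq (a + 1) 1
    have e₂ : (c + 1) * c = (c + 1).choose 2 * 2 := by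
      simpa using Nat.add_one_mul_choose_eq c 1
    have key : (a + 2) * (c + 1) * ((a + 1) * c) = (a + 2) * (c + 1) * 4 :=
      calc (a + 2) * (c + 1) * ((a + 1) * c) = (a + 2) * (a + 1) * ((c + 1) * c) := by ring
        _ = 4 * ((a + 2).choose 2 * (c + 1).choose 2) := by rw [e₁, e₂]; ring
        _ = (a + 2) * (c + 1) * 4 := by rw [h₂, ← h₁]; ring
    have hac : (a + 1) * c = 4 := Nat.eq_of_mul_eq_mul_left (by positivity) key
    obtain rfl : a = 0 := by nlinarith
    omega
  · rintro (rfl | ⟨rfl, rfl⟩)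
    · refine ⟨n - 1, by omega, fun i hi => ?_⟩
      obtain rfl : i = 0 := by omega
      simp
    · refine ⟨10, by norm_num, fun i hi => ?_⟩
      interval_cases i <;> rfl

section KSet

open MulAction

variable {n k : ℕ} {G : Subgroup (Perm (Fin n))}

theorem card_inter_lt_of_ne_kset {α β : {s : Finset (Fin n) // #s = k}} (h : β ≠ α) :
    #(β.1 ∩ α.1) < k := by
  refine ((card_le_card inter_subset_left).trans_eq β.2).lt_of_ne fun heq => h ?_
  have hβα : β.1 ⊆ α.1 :=
    inter_eq_left.1 (eq_of_subset_of_card_le inter_subset_left (by rw [heq, β.2]))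
  exact Subtype.ext (eq_of_subset_of_card_le hβα (by rw [α.2, β.2]))

theorem isPretransitive_kset (hn : 5 ≤ n) (hG : alternatingGroup (Fin n) ≤ G) :
    IsPretransitive G {s : Finset (Fin n) // #s = k} := by
  refine ⟨fun β γ => ?_⟩
  obtain ⟨g, hg, -, hgβ⟩ := exists_mem_alternatingGroup_smul_eq_smul_eq (α := ∅)
    (by simpa using hn) (β.2.trans γ.2.symm) (by simp)
  exact ⟨⟨g, hG hg⟩, Subtype.ext hgβ⟩

theorem mem_orbit_stabilizer_kset_iff (hn : 5 ≤ n) (hG : alternatingGroup (Fin n) ≤ G)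
    {α β γ : {s : Finset (Fin n) // #s = k}} :
    γ ∈ orbit (stabilizer G α) β ↔ #(γ.1 ∩ α.1) = #(β.1 ∩ α.1) := by
  constructor
  · rintro ⟨⟨g, hg⟩, rfl⟩
    have hgα : (g : Perm (Fin n)) • α.1 = α.1 := congrArg Subtype.val hg
    change #((g : Perm (Fin n)) • β.1 ∩ α.1) = _
    rw [← hgα, ← smul_finset_inter, card_smul_finset, hgα]
  · intro h
    obtain ⟨g, hgA, hgα, hgβ⟩ := exists_mem_alternatingGroup_smul_eq_smul_eq
      (by simpa using hn) (β.2.trans γ.2.symm) h.symm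
    exact ⟨⟨⟨g, hG hgA⟩, Subtype.ext hgα⟩, Subtype.ext hgβ⟩

theorem card_orbit_stabilizer_kset (hn : 5 ≤ n) (hG : alternatingGroup (Fin n) ≤ G)
    (α β : {s : Finset (Fin n) // #s = k}) :
    Nat.card (orbit (stabilizer G α) β) =
      k.choose #(β.1 ∩ α.1) * (n - k).choose (k - #(β.1 ∩ α.1)) := by
  have hβ : #(β.1 ∩ α.1) ≤ k := (card_le_card inter_subset_left).trans_eq β.2
  have horbit : orbit (stabilizer G α) β = {γ | #(γ.1 ∩ α.1) = #(β.1 ∩ α.1)} :=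
    Set.ext fun γ => mem_orbit_stabilizer_kset_iff hn hG
  rw [horbit, Set.coe_ofPred, Nat.card_congr (Equiv.subtypeSubtypeEquivSubtypeInter
      (fun s : Finset (Fin n) => #s = k) fun s => #(s ∩ α.1) = #(β.1 ∩ α.1)),
    Nat.card_eq_fintype_card, Fintype.card_subtype, card_filter_card_eq_and_card_inter_eq hβ,
    α.2, Fintype.card_fin]

theorem isThreeHalvesTransitive_kset_iff (hn : 5 ≤ n) (hk : 2 * k < n)
    (hG : alternatingGroup (Fin n) ≤ G) :
    IsThreeHalvesTransitive G {s : Finset (Fin n) // #s = k} ↔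
      ∃ s, 1 < s ∧ ∀ i < k, k.choose i * (n - k).choose (k - i) = s := by
  constructor
  · rintro ⟨-, h⟩
    obtain ⟨α, -, hα⟩ := exists_subset_card_eq (s := (univ : Finset (Fin n))) (n := k)
      (by rw [card_univ, Fintype.card_fin]; omega)
    obtain ⟨s, hs1, hs⟩ := h ⟨α, hα⟩
    refine ⟨s, hs1, fun i hi => ?_⟩
    obtain ⟨β, hβ, hβα⟩ := exists_card_eq_and_card_inter_eq α hi.le
      (by rw [Fintype.card_fin, hα]; omega) (by omega)
    have hne : (⟨β, hβ⟩ : {s : Finset (Fin n) // #s = k}) ≠ ⟨α, hα⟩ := by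
      rintro ⟨⟩
      rw [inter_self] at hβα
      omega
    rw [← hs _ hne, card_orbit_stabilizer_kset hn hG, ← hβα]
  · rintro ⟨s, hs1, hs⟩
    refine ⟨isPretransitive_kset hn hG, fun α => ⟨s, hs1, fun β hβ => ?_⟩⟩
    rw [card_orbit_stabilizer_kset hn hG]
    exact hs _ (card_inter_lt_of_ne_kset hβ)

end KSet

/-- Lemma 4.2: for `G = Aₙ` or `Sₙ` (`n ≥ 5`) acting on `k`-sets with `1 ≤ k < n/2`,
`G` is `3/2`-transitive iff `k = 1` or `(n,k) = (7,2)`. -/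
theorem stmt9 (n k : ℕ) (hn : 5 ≤ n) (hk1 : 1 ≤ k) (hk2 : 2 * k < n)
    (G : Subgroup (Equiv.Perm (Fin n)))
    (hG : G = alternatingGroup (Fin n) ∨ G = ⊤) :
    IsThreeHalvesTransitive G {s : Finset (Fin n) // s.card = k} ↔
      (k = 1 ∨ (n = 7 ∧ k = 2)) := by
  have hA : alternatingGroup (Fin n) ≤ G := by
    rcases hG with rfl | rfl
    exacts [le_rfl, le_top]
  rw [isThreeHalvesTransitive_kset_iff hn hk2 hA, exists_forall_choose_mul_choose_eq_iff hk1 hk2]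
end

section
/- Let G be a finite primitive permutation group of simple diagonal type on Ω, and let p be a prime dividing |Ω|. Then G has a subdegree divisible by p. -/
/-!
The socle `N ≅ T^k` is transitive, so `|Ω| = |N : N_α|` divides `|T|^k` and `p` divides `|T|`.
Since `Z(T) = 1`, some conjugacy class `sᵀ` of `T` has length divisible by `p`: otherwise a
Sylow `p`-subgroup would centralise a member of every class, so its centraliser would meet every
class and hence be all of `T`. Let `β = n • α`, where `n ∈ N` has coordinate `s` at `i` and `1`
elsewhere. An element `(φₗ t)ₗ` of the diagonal `N_α ≅ T` fixes `β` iff `φᵢ t` commutes with `s`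
(compare coordinates `j ≠ i`), so the `N_α`-orbit of `β` has length `|sᵀ|`. As `N_α ⊴ G_α`, this
length divides the subdegree `|β^{G_α}|`.
-/

open MulAction Subgroup

def IsPrimitiveAction (G Ω : Type*) [Group G] [MulAction G Ω] : Prop :=
  MulAction.IsPretransitive G Ω ∧
    ∀ B : Set Ω, MulAction.IsBlock G B → B.Subsingleton ∨ B = Set.univ

theorem IsPrimitiveAction.isPreprimitive {G Ω : Type*} [Group G] [MulAction G Ω]
    (h : IsPrimitiveAction G Ω) : IsPreprimitive G Ω :=
  have := h.1
  { isTrivialBlock_of_isBlock := fun hB => h.2 _ hB }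

namespace Subgroup

variable {G : Type*} [Group G]

theorem relIndex_dvd_index_of_normal_right_s13 (H K : Subgroup G) [K.Normal]
    [K.IsFiniteRelIndex H] : H.relIndex K ∣ H.index := by
  have key : K.relIndex H * H.relIndex (H ⊔ K) = K.relIndex H * H.relIndex K :=
    calc K.relIndex H * H.relIndex (H ⊔ K)
        = (H ⊓ K).relIndex H * H.relIndex (H ⊔ K) := by rw [inf_relIndex_left]
      _ = (H ⊓ K).relIndex K * K.relIndex (H ⊔ K) := by
        rw [relIndex_mul_relIndex _ _ _ inf_le_left le_sup_left,
          relIndex_mul_relIndex _ _ _ inf_le_right le_sup_right]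
      _ = K.relIndex H * H.relIndex K := by
        rw [inf_relIndex_right, relIndex_sup_right, mul_comm]
  rw [← Nat.eq_of_mul_eq_mul_left (Nat.pos_of_ne_zero relIndex_ne_zero) key]
  exact relIndex_dvd_index_of_le le_sup_left

/-- The conjugates of a proper subgroup `C`, one for each coset, have at most
`index * (card - 1) + 1 < card G` elements. -/
theorem eq_top_of_forall_exists_conj_mem [Finite G] (C : Subgroup G)
    (hC : ∀ s : G, ∃ g : G, g * s * g⁻¹ ∈ C) : C = ⊤ := by
  classical
  let F : (G ⧸ C) × {c : C // c ≠ 1} → {s : G // s ≠ 1} := fun qc =>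
    ⟨qc.1.out * qc.2.1 * qc.1.out⁻¹, by simpa using qc.2.2⟩
  have hF : Function.Surjective F := by
    rintro ⟨s, hs⟩
    obtain ⟨g, hg⟩ := hC s
    set q : G ⧸ C := ((g⁻¹ : G) : G ⧸ C)
    have hc : g * q.out ∈ C := by simpa using QuotientGroup.eq.mp (QuotientGroup.out_eq' q).symm
    have hy : (g * q.out)⁻¹ * (g * s * g⁻¹) * (g * q.out) ∈ C :=
      mul_mem (mul_mem (inv_mem hc) hg) hc
    refine ⟨(q, ⟨⟨_, hy⟩, fun h1 => hs ?_⟩), ?_⟩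
    · simpa [mul_assoc, inv_mul_eq_one] using congrArg Subtype.val h1
    · ext
      simp only [F]
      group
  have hG : Nat.card {s : G // s ≠ 1} + 1 = Nat.card G := by
    rw [← Finite.card_option, Nat.card_congr (Equiv.optionSubtypeNe 1)]
  have hCcard : Nat.card {c : C // c ≠ 1} + 1 = Nat.card C := by
    rw [← Finite.card_option, Nat.card_congr (Equiv.optionSubtypeNe 1)]
  have hle := Nat.card_le_card_of_surjective F hF
  rw [Nat.card_prod, ← index_eq_card] at hle
  have := C.card_mul_index
  have := C.index_ne_zero_of_finite
  rw [← index_eq_one]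
  nlinarith

theorem _root_.IsPGroup.le_center_of_forall_not_dvd_index_centralizer [Finite G] {p : ℕ}
    [Fact p.Prime] {P : Subgroup G} (hP : IsPGroup p P)
    (h : ∀ s : G, ¬ p ∣ (centralizer {s}).index) : P ≤ center G := by
  suffices centralizer (P : Set G) = ⊤ from centralizer_eq_top_iff_subset.mp this
  refine eq_top_of_forall_exists_conj_mem _ fun s => ?_
  obtain ⟨q, hq⟩ := hP.nonempty_fixed_point_of_prime_not_dvd_card (G ⧸ centralizer {s})
    (index_eq_card (centralizer {s}) ▸ h s)
  obtain ⟨g, rfl⟩ := QuotientGroup.mk_surjective q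
  refine ⟨g, mem_centralizer_iff.mpr fun x hx => ?_⟩
  have hc : g⁻¹ * (x * g) * s = s * (g⁻¹ * (x * g)) :=
    mem_centralizer_singleton_iff.mp (QuotientGroup.eq.mp (hq ⟨x, hx⟩).symm)
  calc x * (g * s * g⁻¹) = g * (g⁻¹ * (x * g) * s) * g⁻¹ := by group
    _ = g * (s * (g⁻¹ * (x * g))) * g⁻¹ := by rw [hc]
    _ = g * s * g⁻¹ * x := by group

theorem exists_prime_dvd_index_centralizer [Finite G] (hZ : center G = ⊥) {p : ℕ}
    (hp : p.Prime) (hpG : p ∣ Nat.card G) : ∃ s : G, p ∣ (centralizer {s}).index := by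
  have := Fact.mk hp
  by_contra! h
  let P : Sylow p G := default
  exact P.ne_bot_of_dvd_card hpG
    (le_bot_iff.mp (hZ ▸ P.isPGroup'.le_center_of_forall_not_dvd_index_centralizer h))

end Subgroup

theorem IsSimpleGroup.center_eq_bot_of_exists_mul_ne_mul {T : Type*} [Group T] [IsSimpleGroup T]
    (hT : ∃ a b : T, a * b ≠ b * a) : center T = ⊥ := by
  refine (eq_bot_or_eq_top_of_normal _ inferInstance).resolve_right fun h => ?_
  obtain ⟨a, b, hab⟩ := hT
  exact hab (mem_center_iff.mp (h ▸ mem_top a) b).symm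

namespace MulAction

variable {G Ω : Type*} [Group G] [MulAction G Ω]

theorem card_orbit_subgroup_eq_relIndex (K : Subgroup G) (β : Ω) :
    Nat.card (orbit K β) = (stabilizer G β).relIndex K := by
  rw [Nat.card_coe_set_eq, ← index_stabilizer]
  rfl

theorem card_orbit_dvd_card_orbit_of_normal [Finite G] {K H : Subgroup G} (hKH : K ≤ H)
    [(K.subgroupOf H).Normal] (β : Ω) : Nat.card (orbit K β) ∣ Nat.card (orbit H β) := by
  rw [card_orbit_subgroup_eq_relIndex, card_orbit_subgroup_eq_relIndex,
    ← relIndex_subgroupOf hKH]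
  have : (K.subgroupOf H).IsFiniteRelIndex ((stabilizer G β).subgroupOf H) :=
    isFiniteRelIndex_iff_finiteIndex.mpr inferInstance
  exact relIndex_dvd_index_of_normal_right_s13 _ _

theorem IsPreprimitive.isPretransitive_of_normal [FaithfulSMul G Ω] [IsPreprimitive G Ω]
    {N : Subgroup G} [N.Normal] (hN : N ≠ ⊥) : IsPretransitive N Ω := by
  refine IsQuasiPreprimitive.isPretransitive_of_normal fun hfix => hN ?_
  refine (eq_bot_iff_forall N).mpr fun n hn => eq_of_smul_eq_smul (α := Ω) fun x => ?_
  have hx : x ∈ fixedPoints N Ω := hfix ▸ Set.mem_univ x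
  rw [one_smul]
  exact hx ⟨n, hn⟩

end MulAction

section Diagonal

variable {G Ω T ι : Type*} [Group G] [MulAction G Ω] [Group T] {N : Subgroup G}
  (e : N ≃* (ι → T)) (φ : ι → MulAut T)

def diagonalEmbedding : T →* G :=
  N.subtype.comp (e.symm.toMonoidHom.comp (MonoidHom.pi fun i => (φ i).toMonoidHom))

theorem diagonalEmbedding_apply (t : T) :
    diagonalEmbedding e φ t = e.symm (fun i => φ i t) := rfl

theorem exists_conj_mulSingle_eq_iff [DecidableEq ι] {i j : ι} (hij : i ≠ j) (s t : T) :
    (∃ u : T, (Pi.mulSingle i s)⁻¹ * (fun l => φ l t) * Pi.mulSingle i s = fun l => φ l u) ↔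
      φ i t ∈ centralizer {s} := by
  rw [mem_centralizer_singleton_iff]
  constructor
  · rintro ⟨u, hu⟩
    have htu : t = u := (φ j).injective (by simpa [hij.symm] using congrFun hu j)
    have hi := congrFun hu i
    simp only [Pi.mul_apply, Pi.inv_apply, Pi.mulSingle_eq_same, ← htu] at hi
    rwa [mul_assoc, inv_mul_eq_iff_eq_mul] at hi
  · intro hc
    refine ⟨t, funext fun l => ?_⟩
    rcases eq_or_ne l i with rfl | hl
    · simp [mul_assoc, hc]
    · simp [hl]

variable {e φ} {α : Ω} (hdiag : ∀ x : N, (x : G) ∈ stabilizer G α ↔ ∃ t : T, e x = fun i => φ i t)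
include hdiag

theorem range_diagonalEmbedding : (diagonalEmbedding e φ).range = N ⊓ stabilizer G α := by
  ext g
  constructor
  · rintro ⟨t, rfl⟩
    exact ⟨(e.symm _).2, (hdiag _).mpr ⟨t, e.apply_symm_apply _⟩⟩
  · rintro ⟨hgN, hgα⟩
    obtain ⟨t, ht⟩ := (hdiag ⟨g, hgN⟩).mp hgα
    exact ⟨t, by rw [diagonalEmbedding_apply, ← ht, e.symm_apply_apply]⟩

theorem comap_diagonalEmbedding_stabilizer [DecidableEq ι] {i j : ι} (hij : i ≠ j) (s : T) :
    (stabilizer G ((e.symm (Pi.mulSingle i s) : G) • α)).comap (diagonalEmbedding e φ) =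
      (centralizer {s}).comap (φ i).toMonoidHom := by
  ext t
  set n : N := e.symm (Pi.mulSingle i s)
  have hconj : diagonalEmbedding e φ t • (n : G) • α = (n : G) • α ↔
      ((n⁻¹ * e.symm (fun l => φ l t) * n : N) : G) ∈ stabilizer G α := by
    rw [mem_stabilizer_iff, coe_mul, coe_mul, coe_inv, mul_smul, mul_smul, inv_smul_eq_iff]
    rfl
  rw [mem_comap, mem_comap, mem_stabilizer_iff, hconj, hdiag, map_mul, map_mul, map_inv,
    e.apply_symm_apply, e.apply_symm_apply]
  exact exists_conj_mulSingle_eq_iff φ hij s t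

theorem card_orbit_inf_stabilizer_mulSingle_smul [DecidableEq ι] {i j : ι} (hij : i ≠ j)
    (s : T) :
    Nat.card (orbit (N ⊓ stabilizer G α : Subgroup G) ((e.symm (Pi.mulSingle i s) : G) • α)) =
      (centralizer {s}).index := by
  rw [card_orbit_subgroup_eq_relIndex, ← range_diagonalEmbedding hdiag, ← index_comap,
    comap_diagonalEmbedding_stabilizer hdiag hij, index_comap_of_surjective _ (φ i).surjective]

end Diagonal

theorem stmt13_general {G Ω : Type*} [Group G] [Finite G] [MulAction G Ω]
    [FaithfulSMul G Ω] (hprim : IsPrimitiveAction G Ω)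
    {T : Type*} [Group T] [Finite T] [IsSimpleGroup T]
    (hna : ∃ a b : T, a * b ≠ b * a)
    (k : ℕ) (hk : 2 ≤ k) (N : Subgroup G) (hN : N.Normal) (hNbot : N ≠ ⊥)
    (e : N ≃* (Fin k → T)) (α : Ω) (φ : Fin k → MulAut T)
    (hdiag : ∀ x : N, (x : G) ∈ MulAction.stabilizer G α ↔ ∃ t : T, e x = fun i => φ i t)
    (p : ℕ) (hp : p.Prime) (hpΩ : p ∣ Nat.card Ω) :
    ∃ β : Ω, p ∣ Nat.card (MulAction.orbit (MulAction.stabilizer G α) β) := by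
  have := hprim.isPreprimitive
  have := hN
  have : IsPretransitive N Ω := IsPreprimitive.isPretransitive_of_normal hNbot
  have hpT : p ∣ Nat.card T := by
    refine hp.dvd_of_dvd_pow (hpΩ.trans ?_ : p ∣ Nat.card T ^ k)
    rw [← index_stabilizer_of_transitive N α, ← Nat.card_fin k, ← Nat.card_fun,
      ← Nat.card_congr e.toEquiv]
    exact index_dvd_card _
  obtain ⟨s, hs⟩ := exists_prime_dvd_index_centralizer
    (IsSimpleGroup.center_eq_bot_of_exists_mul_ne_mul hna) hp hpT
  have : Nontrivial (Fin k) := Fin.nontrivial_iff_two_le.mpr hk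
  obtain ⟨i, j, hij⟩ := exists_pair_ne (Fin k)
  refine ⟨(e.symm (Pi.mulSingle i s) : G) • α, hs.trans ?_⟩
  rw [← card_orbit_inf_stabilizer_mulSingle_smul hdiag hij s]
  have : ((N ⊓ stabilizer G α).subgroupOf (stabilizer G α)).Normal := by
    rw [inf_subgroupOf_right]
    infer_instance
  exact card_orbit_dvd_card_orbit_of_normal inf_le_right _

/-- Lemma 3.4: a finite primitive permutation group of simple diagonal type (socle
`N ≅ T^k` with `T` nonabelian simple, `k ≥ 2`, and point stabiliser meeting `N` in a
full diagonal subgroup) has, for every prime `p` dividing `|Ω|`, a subdegree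
divisible by `p`. -/
theorem stmt13 {G Ω : Type*} [Group G] [Finite G] [Finite Ω] [MulAction G Ω]
    [FaithfulSMul G Ω] (hprim : IsPrimitiveAction G Ω)
    {T : Type*} [Group T] [Finite T] [IsSimpleGroup T]
    (hna : ∃ a b : T, a * b ≠ b * a)
    (k : ℕ) (hk : 2 ≤ k) (N : Subgroup G) (hN : N.Normal) (hNbot : N ≠ ⊥)
    (e : N ≃* (Fin k → T)) (α : Ω) (φ : Fin k → MulAut T)
    (hdiag : ∀ x : N, (x : G) ∈ MulAction.stabilizer G α ↔ ∃ t : T, e x = fun i => φ i t)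
    (p : ℕ) (hp : p.Prime) (hpΩ : p ∣ Nat.card Ω) :
    ∃ β : Ω, p ∣ Nat.card (MulAction.orbit (MulAction.stabilizer G α) β) :=
  stmt13_general hprim hna k hk N hN hNbot e α φ hdiag p hp hpΩ
end

section
/- Let G be a finite transitive permutation group with point stabiliser H, let p be a prime dividing |H|, and let P be a Sylow p-subgroup of H. Then all subdegrees of G are coprime to p if and only if G admits the triple factorization G = H·N_G(P)·H. -/
open Subgroup MulAction Pointwise

theorem Sylow.exists_le_of_not_dvd_index_s15 {K : Type*} [Group K] [Finite K] {p : ℕ} [Fact p.Prime]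
    {L : Subgroup K} (hL : ¬ p ∣ L.index) : ∃ S : Sylow p K, (S : Subgroup K) ≤ L := by
  let T : Sylow p L := default
  have hTL : (T : Subgroup L).map L.subtype ≤ L := map_subtype_le _
  have hT : ¬ p ∣ ((T : Subgroup L).map L.subtype).index := by
    have hsub : ((T : Subgroup L).map L.subtype).subgroupOf L = T :=
      comap_map_eq_self_of_injective L.subtype_injective _
    rw [← relIndex_mul_index hTL, relIndex, hsub]
    exact (Fact.out : p.Prime).not_dvd_mul T.not_dvd_index hL
  exact ⟨(T.2.map L.subtype).toSylow hT, hTL⟩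

theorem Sylow.coprime_card_orbit_iff {K X : Type*} [Group K] [Finite K] [MulAction K X]
    {p : ℕ} [Fact p.Prime] (S : Sylow p K) (x : X) :
    p.Coprime (Nat.card (orbit K x)) ↔ ∃ k : K, (S : Subgroup K) ≤ stabilizer K (k • x) := by
  rw [(Fact.out : p.Prime).coprime_iff_not_dvd, Nat.card_coe_set_eq, ← index_stabilizer]
  constructor
  · intro hx
    obtain ⟨T, hT⟩ := Sylow.exists_le_of_not_dvd_index_s15 hx
    obtain ⟨k, rfl⟩ := exists_smul_eq K T S
    refine ⟨k, ?_⟩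
    rw [stabilizer_smul_eq_stabilizer_map_conj]
    exact map_mono hT
  · rintro ⟨k, hk⟩ hdvd
    rw [index_stabilizer, ← orbit_smul k x, ← index_stabilizer] at hdvd
    exact S.not_dvd_index (hdvd.trans (index_dvd_of_le hk))

namespace IsSylowIn

variable {G : Type*} [Group G] {p : ℕ} {P H : Subgroup G}

def toSylow (hP : IsSylowIn p P H) : Sylow p H where
  toSubgroup := P.subgroupOf H
  isPGroup' := hP.2.1.comap_of_injective H.subtype H.subtype_injective
  is_maximal' := by
    intro Q hQ hle
    have hPQ : P ≤ Q.map H.subtype := by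
      simpa only [subgroupOf_map_subtype, inf_eq_left.mpr hP.1] using map_mono (f := H.subtype) hle
    rw [← comap_map_eq_self_of_injective H.subtype_injective Q,
      hP.2.2 _ (map_subtype_le Q) (hQ.map _) hPQ]
    rfl

theorem toSylow_le_stabilizer_iff {Ω : Type*} [MulAction G Ω] (hP : IsSylowIn p P H) (y : Ω) :
    (hP.toSylow : Subgroup H) ≤ stabilizer H y ↔ P ≤ stabilizer G y :=
  ⟨fun h v hv => h (show (⟨v, hP.1 hv⟩ : H) ∈ P.subgroupOf H from hv), fun h _ hv => h hv⟩

theorem exists_conj_smul_eq [Finite G] [Fact p.Prime] (hP : IsSylowIn p P H) {g : G}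
    (hg : MulAut.conj g • P ≤ H) : ∃ h ∈ H, MulAut.conj h • P = MulAut.conj g • P := by
  have hpg : IsPGroup p ((MulAut.conj g • P).subgroupOf H) :=
    (hP.2.1.map _).comap_of_injective H.subtype H.subtype_injective
  have hidx : (MulAut.conj g • P).relIndex H = P.relIndex H := by
    refine Nat.eq_of_mul_eq_mul_right (Nat.pos_of_ne_zero H.index_ne_zero_of_finite) ?_
    rw [relIndex_mul_index hg, relIndex_mul_index hP.1]
    exact index_map_equiv P (MulAut.conj g)
  let T : Sylow p H := hpg.toSylow (by rw [← relIndex, hidx]; exact hP.toSylow.not_dvd_index)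
  obtain ⟨h, hh⟩ := exists_smul_eq H hP.toSylow T
  refine ⟨h, h.2, ?_⟩
  have := congrArg (fun S : Sylow p H => (S : Subgroup H)) hh
  simp only [Sylow.coe_subgroup_smul] at this
  rwa [show (hP.toSylow : Subgroup H) = P.subgroupOf H from rfl, conj_smul_subgroupOf hP.1,
    show (T : Subgroup H) = (MulAut.conj g • P).subgroupOf H from rfl, subgroupOf_inj,
    inf_eq_left.mpr (conj_smul_le_of_le hP.1 h), inf_eq_left.mpr hg] at this


theorem le_stabilizer_smul_iff [Finite G] [Fact p.Prime] {Ω : Type*} [MulAction G Ω] {α : Ω}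
    (hP : IsSylowIn p P (stabilizer G α)) (g : G) :
    P ≤ stabilizer G (g • α) ↔
      ∃ x ∈ normalizer (P : Set G), ∃ h ∈ stabilizer G α, g = x * h := by
  constructor
  · intro hg
    have hle : MulAut.conj g⁻¹ • P ≤ stabilizer G α := by
      rintro - ⟨v, hv, rfl⟩
      change (g⁻¹ * v * g⁻¹⁻¹) • α = α
      rw [inv_inv, mul_smul, mul_smul, hg hv, inv_smul_smul]
    obtain ⟨h, hh, hconj⟩ := hP.exists_conj_smul_eq hle
    refine ⟨g * h, ?_, h⁻¹, inv_mem hh, by group⟩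
    rw [← conjAct_pointwise_smul_iff]
    change MulAut.conj (g * h) • P = P
    rw [map_mul, mul_smul, hconj, ← mul_smul, ← map_mul, mul_inv_cancel, map_one, one_smul]
  · rintro ⟨x, hx, h, hh, rfl⟩ v hv
    have hvx : x⁻¹ * v * x ∈ P := by
      simpa using (mem_normalizer_iff.mp (inv_mem hx) v).mp hv
    change v • (x * h) • α = (x * h) • α
    rw [mul_smul, mem_stabilizer_iff.mp hh]
    calc v • x • α = x • (x⁻¹ * v * x) • α := by simp [mul_smul]
      _ = x • α := by rw [mem_stabilizer_iff.mp (hP.1 hvx)]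

end IsSylowIn

theorem stmt15_general {G Ω : Type*} [Group G] [Finite G] [MulAction G Ω]
    (htrans : MulAction.IsPretransitive G Ω) (α : Ω)
    (p : ℕ) (hp : p.Prime)
    (P : Subgroup G) (hP : IsSylowIn p P (MulAction.stabilizer G α)) :
    (∀ β : Ω, Nat.Coprime p (Nat.card (MulAction.orbit (MulAction.stabilizer G α) β))) ↔
    (∀ g : G, ∃ h₁ ∈ MulAction.stabilizer G α, ∃ x ∈ Subgroup.normalizer (P : Set G),
      ∃ h₂ ∈ MulAction.stabilizer G α, g = h₁ * x * h₂) := by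
  have : Fact p.Prime := ⟨hp⟩
  constructor
  · intro hcop g
    obtain ⟨k, hk⟩ := (hP.toSylow.coprime_card_orbit_iff (g • α)).mp (hcop _)
    rw [hP.toSylow_le_stabilizer_iff, Subgroup.smul_def, smul_smul] at hk
    obtain ⟨x, hx, h, hh, hkg⟩ := (hP.le_stabilizer_smul_iff _).mp hk
    exact ⟨k⁻¹, inv_mem k.2, x, hx, h, hh, by rw [mul_assoc, ← hkg]; group⟩
  · intro hfac β
    obtain ⟨g, rfl⟩ := exists_smul_eq G α β
    obtain ⟨h₁, hh₁, x, hx, h₂, hh₂, rfl⟩ := hfac g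
    refine (hP.toSylow.coprime_card_orbit_iff _).mpr ⟨⟨h₁, hh₁⟩⁻¹, ?_⟩
    rw [hP.toSylow_le_stabilizer_iff, Subgroup.smul_def, smul_smul]
    convert (hP.le_stabilizer_smul_iff (x * h₂)).mpr ⟨x, hx, h₂, hh₂, rfl⟩ using 3
    simp [mul_assoc]

/-- Triple factorization criterion: for a finite transitive group `G` with point
stabiliser `H`, a prime `p` dividing `|H|` and `P` a Sylow `p`-subgroup of `H`,
all subdegrees of `G` are coprime to `p` iff `G = H·N_G(P)·H`. -/
theorem stmt15 {G Ω : Type*} [Group G] [Finite G] [Finite Ω] [MulAction G Ω]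
    [FaithfulSMul G Ω] (htrans : MulAction.IsPretransitive G Ω) (α : Ω)
    (p : ℕ) (hp : p.Prime) (hpH : p ∣ Nat.card (MulAction.stabilizer G α))
    (P : Subgroup G) (hP : IsSylowIn p P (MulAction.stabilizer G α)) :
    (∀ β : Ω, Nat.Coprime p (Nat.card (MulAction.orbit (MulAction.stabilizer G α) β))) ↔
    (∀ g : G, ∃ h₁ ∈ MulAction.stabilizer G α, ∃ x ∈ Subgroup.normalizer (P : Set G),
      ∃ h₂ ∈ MulAction.stabilizer G α, g = h₁ * x * h₂) :=
  stmt15_general htrans α p hp P hP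
end

section
/- Let p and d be primes with d odd, let q = p^f for some positive integer f, and let ε = ±1. Then d does not divide (q^d − ε)/((q − ε)·gcd(q − ε, d)). -/
/-!
Put `S = ∑_{i<d} q^i ε^(d-1-i)`, so that `(q - ε) S = q^d - ε` and hence `gcd(q - ε, d) y = S`.
If `d ∤ q - ε` the gcd is `1`, and Fermat's little theorem gives `S (q - ε) ≡ q - ε`, so
`S ≡ 1 (mod d)`. If `d ∣ q - ε` the gcd is `d`, and expanding `q^i = (ε + d c)^i` to first order
gives `S ≡ d ε^(d-1) = d (mod d²)`. Either way `y ≡ 1 (mod d)`.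
-/

theorem Int.geom_sum₂_modEq_one_of_not_dvd_sub {d : ℕ} (hd : d.Prime) {a b : ℤ}
    (hab : ¬ (d : ℤ) ∣ a - b) :
    ∑ i ∈ Finset.range d, a ^ i * b ^ (d - 1 - i) ≡ 1 [ZMOD d] := by
  have := Fact.mk hd
  rw [← ZMod.intCast_eq_intCast_iff]
  have hne : ((a - b : ℤ) : ZMod d) ≠ 0 := by rwa [Ne, ZMod.intCast_zmod_eq_zero_iff_dvd]
  have h := congrArg (fun z : ℤ => (z : ZMod d)) (geom_sum₂_mul a b d)
  push_cast at h hne ⊢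
  rw [ZMod.pow_card, ZMod.pow_card] at h
  exact mul_right_cancel₀ hne (h.trans (one_mul _).symm)

theorem Int.geom_sum₂_modEq_of_dvd_sub {d : ℕ} (hodd : Odd d) {a b : ℤ}
    (hab : (d : ℤ) ∣ a - b) :
    ∑ i ∈ Finset.range d, a ^ i * b ^ (d - 1 - i) ≡ d * b ^ (d - 1) [ZMOD d ^ 2] := by
  obtain ⟨c, hc⟩ := hab
  obtain rfl : a = b + d * c := by linarith
  exact (Int.modEq_iff_dvd.mpr (odd_sq_dvd_geom_sum₂_sub b c hodd)).symm

theorem Int.modEq_one_of_gcd_mul_eq_geom_sum₂ {d : ℕ} (hd : d.Prime) (hodd : Odd d)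
    {a b y : ℤ} (hb : ¬ (d : ℤ) ∣ b)
    (hy : (Int.gcd (a - b) d : ℤ) * y = ∑ i ∈ Finset.range d, a ^ i * b ^ (d - 1 - i)) :
    y ≡ 1 [ZMOD d] := by
  have hd_irr : Irreducible (d : ℤ) := (Nat.prime_iff_prime_int.mp hd).irreducible
  by_cases hab : (d : ℤ) ∣ a - b
  · rw [Int.gcd_eq_natAbs_right hab, Int.natAbs_natCast] at hy
    have hdy : (d : ℤ) * y ≡ d * b ^ (d - 1) [ZMOD d * d] := by
      rw [hy, ← sq]; exact Int.geom_sum₂_modEq_of_dvd_sub hodd hab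
    have hfermat : b ^ (d - 1) ≡ 1 [ZMOD d] :=
      Int.ModEq.pow_card_sub_one_eq_one hd ((hd_irr.coprime_iff_not_dvd.mpr hb).symm)
    exact (hdy.mul_left_cancel' (by exact_mod_cast hd.ne_zero)).trans hfermat
  · rw [Int.isCoprime_iff_gcd_eq_one.mp ((hd_irr.coprime_iff_not_dvd.mpr hab).symm),
      Nat.cast_one, one_mul] at hy
    exact hy ▸ Int.geom_sum₂_modEq_one_of_not_dvd_sub hd hab

/-- Lemma 6.6: let `p` and `d` be primes with `d` odd, `q = p^f`, `ε = ±1`.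
Then `d` does not divide `(q^d − ε)/((q − ε)·gcd(q − ε, d))`; here `y` denotes this
(integral) quotient, characterised by `(q − ε)·gcd(q − ε, d)·y = q^d − ε`. -/
theorem stmt16 (p d : ℕ) (hp : p.Prime) (hd : d.Prime) (hodd : Odd d)
    (f : ℕ) (hf : 0 < f) (ε : ℤ) (hε : ε = 1 ∨ ε = -1) (y : ℤ)
    (hy : (((p : ℤ) ^ f - ε) * (Int.gcd ((p : ℤ) ^ f - ε) (d : ℤ) : ℤ)) * y
      = ((p : ℤ) ^ f) ^ d - ε) :
    ¬ (d : ℤ) ∣ y := by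
  have hq : 1 < (p : ℤ) ^ f := by exact_mod_cast Nat.one_lt_pow hf.ne' hp.one_lt
  set q : ℤ := (p : ℤ) ^ f
  have hqε : q - ε ≠ 0 := by rcases hε with rfl | rfl <;> omega
  have hεd : ε ^ d = ε := by rcases hε with rfl | rfl <;> simp [hodd.neg_one_pow]
  have hdε : ¬ (d : ℤ) ∣ ε := by
    rcases hε with rfl | rfl <;> simp [Int.natCast_dvd, hd.ne_one]
  have hgy : (Int.gcd (q - ε) d : ℤ) * y = ∑ i ∈ Finset.range d, q ^ i * ε ^ (d - 1 - i) :=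
    mul_left_cancel₀ hqε (by rw [← mul_assoc, hy, mul_comm, geom_sum₂_mul, hεd])
  have hy1 : y ≡ 1 [ZMOD d] := Int.modEq_one_of_gcd_mul_eq_geom_sum₂ hd hodd hdε hgy
  intro hdy
  have hd1 : (d : ℤ) ∣ 1 := by simpa using dvd_add hy1.dvd hdy
  exact hd.ne_one (by exact_mod_cast Int.eq_one_of_dvd_one (by positivity) hd1)
end

section
/- Let G ≤ Sym(Ω) be a finite permutation group. If there exists a k-element subset Γ of Ω such that Γ^g ∩ Γ ≠ ∅ for all g ∈ G, then Γ intersects nontrivially some G-orbit of length at most k² − k + 1. -/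
/-!
If `Γ` lies in a single orbit `O`, the translates `g • Γ` (`g ∈ G`) form an intersecting family
of `k`-subsets of `O` in which every point lies in the same number `r` of members. Fix a point
`z`: every member through `z` meets every member avoiding `z`, and comparing this count with the
first two moments of the codegrees `λ(z, w)` (Cauchy–Schwarz) gives
`r² (n - k) (n - 1 - k (k - 1)) ≤ 0` for `n = |O|`, hence `n ≤ k² - k + 1`.

Otherwise every orbit meets `Γ` in at most `k - 1` points. Every `g` maps some point of `Γ` into
`Γ`, so `|G| ≤ ∑_{x ∈ Γ} |Γ ∩ xᴳ| |G_x|`, which forces an orbit of length at most `k (k - 1)`.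
-/

open Finset

namespace RestrictedMovement

section Family

variable {ι α : Type*} [DecidableEq α]

theorem sum_sum_eq_sum_card_filter_nsmul {M : Type*} [AddCommMonoid M] {B : ι → Finset α}
    {O : Finset α} {s : Finset ι} (hB : ∀ i ∈ s, B i ⊆ O) (f : α → M) :
    ∑ i ∈ s, ∑ w ∈ B i, f w = ∑ w ∈ O, #{i ∈ s | w ∈ B i} • f w := by
  rw [sum_comm' (t' := O) (s' := fun w => {i ∈ s | w ∈ B i})]
  · simp only [sum_const]
  · intro i w
    simp only [mem_filter]
    exact ⟨fun h => ⟨⟨h.1, h.2⟩, hB i h.1 h.2⟩, fun h => ⟨h.1.1, h.1.2⟩⟩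

variable [Fintype ι] (B : ι → Finset α)

/- Families are indexed, so that the translates `g • Γ` are counted once for each `g`. -/
def degree (z : α) : ℕ := #{i | z ∈ B i}

def codegree (z w : α) : ℕ := #{i | z ∈ B i ∧ w ∈ B i}

variable {B}

theorem codegree_self (z : α) : codegree B z z = degree B z := by
  simp only [codegree, degree, and_self]

theorem codegree_add_card_filter (z w : α) :
    codegree B z w + #{i | z ∉ B i ∧ w ∈ B i} = degree B w := by
  have := card_filter_add_card_filter_not (s := {i | w ∈ B i}) (fun i => z ∈ B i)
  rw [filter_filter, filter_filter] at this
  simpa only [codegree, degree, and_comm] using this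

theorem card_mul_eq_card_mul_of_regular {O : Finset α} {k r : ℕ} (hB : ∀ i, B i ⊆ O)
    (hk : ∀ i, #(B i) = k) (hdeg : ∀ z ∈ O, degree B z = r) :
    Fintype.card ι * k = #O * r := by
  have := sum_sum_eq_sum_card_filter_nsmul (s := univ) (fun i _ => hB i) (fun _ => 1)
  simp only [sum_const, hk, smul_eq_mul, mul_one, card_univ] at this
  rw [this, ← sum_const_nat hdeg, sum_congr rfl fun z _ => (degree.eq_1 B z).symm]

theorem sum_codegree {O : Finset α} {k : ℕ} (hB : ∀ i, B i ⊆ O) (hk : ∀ i, #(B i) = k)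
    (z : α) : ∑ w ∈ O, codegree B z w = degree B z * k := by
  have := sum_sum_eq_sum_card_filter_nsmul (s := {i | z ∈ B i}) (fun i _ => hB i) (fun _ => 1)
  simp only [sum_const, hk, smul_eq_mul, mul_one, filter_filter] at this
  exact this.symm

theorem degree_le_sum_codegree {j : ι} (hinter : ∀ i, (B i ∩ B j).Nonempty) (z : α) :
    degree B z ≤ ∑ w ∈ B j, codegree B z w := by
  classical
  calc degree B z ≤ #((B j).biUnion fun w => {i | z ∈ B i ∧ w ∈ B i}) := by
        refine card_le_card fun i hi => ?_
        obtain ⟨w, hw⟩ := hinter i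
        rw [mem_inter] at hw
        simp only [mem_filter, mem_univ, true_and] at hi
        exact mem_biUnion.2 ⟨w, hw.2, by simp [hi, hw.1]⟩
    _ ≤ _ := card_biUnion_le

/- Sum `degree_le_sum_codegree` over the members `B j ∌ z`: the term `λ(z, w) = codegree B z w`
occurs `#{j | z ∉ B j ∧ w ∈ B j} = r - λ(z, w)` times. -/
theorem card_filter_notMem_mul_add_sum_sq_le {O : Finset α} {r : ℕ} (hB : ∀ i, B i ⊆ O)
    (hdeg : ∀ w ∈ O, degree B w = r) (hinter : ∀ i j, (B i ∩ B j).Nonempty) {z : α}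
    (hz : z ∈ O) :
    #{i | z ∉ B i} * r + ∑ w ∈ O.erase z, codegree B z w ^ 2
      ≤ r * ∑ w ∈ O.erase z, codegree B z w := by
  set avoiding : α → ℕ := fun w => #{i | z ∉ B i ∧ w ∈ B i}
  have hcount : #{i | z ∉ B i} * r ≤ ∑ w ∈ O.erase z, avoiding w * codegree B z w :=
    calc #{i | z ∉ B i} * r = ∑ j ∈ {i | z ∉ B i}, degree B z := by
          rw [sum_const, hdeg z hz, smul_eq_mul]
      _ ≤ ∑ j ∈ {i | z ∉ B i}, ∑ w ∈ B j, codegree B z w :=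
          sum_le_sum fun j _ => degree_le_sum_codegree (fun i => hinter i j) z
      _ = ∑ w ∈ O, avoiding w * codegree B z w := by
          rw [sum_sum_eq_sum_card_filter_nsmul fun i _ => hB i]
          simp only [filter_filter, smul_eq_mul, avoiding]
      _ = ∑ w ∈ O.erase z, avoiding w * codegree B z w := by
          rw [← add_sum_erase _ _ hz]
          simp [avoiding]
  have hsplit : ∀ w ∈ O.erase z,
      avoiding w * codegree B z w + codegree B z w ^ 2 = r * codegree B z w := by
    intro w hw
    rw [sq, ← add_mul, add_comm, codegree_add_card_filter, hdeg w (mem_of_mem_erase hw)]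
  calc _ ≤ ∑ w ∈ O.erase z, avoiding w * codegree B z w + ∑ w ∈ O.erase z, codegree B z w ^ 2 := by
        gcongr
    _ = r * ∑ w ∈ O.erase z, codegree B z w := by
        rw [← sum_add_distrib, mul_sum]
        exact sum_congr rfl hsplit

/- `n + 1` points, each in `r` of the `r + M` members, `L` and `Q` the sums of `λ(z, w)` and
`λ(z, w)²` over the `n` points `w ≠ z`. The hypotheses combine to
`r² (n + 1 - k) (n - k (k - 1)) ≤ 0`. -/
theorem add_one_le_sq_sub_add_one {n M r k L Q : ℕ} (hr : 0 < r)
    (hN : (r + M) * k = (n + 1) * r) (hL : L + r = r * k) (hcount : M * r + Q ≤ r * L)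
    (hCS : L ^ 2 ≤ n * Q) : n + 1 ≤ k ^ 2 - k + 1 := by
  have hk : 1 ≤ k := Nat.pos_of_mul_pos_left (a := r + M) (hN ▸ by positivity)
  suffices n ≤ k * (k - 1) by
    have : k ^ 2 - k = k * (k - 1) := by rw [sq, Nat.mul_sub_one]
    omega
  zify [hk] at hN hL hcount hCS ⊢
  by_contra! hn
  have hL' : (L : ℤ) = r * (k - 1) := by linear_combination hL
  rw [hL'] at hcount hCS
  have hle : (r : ℤ) ^ 2 * ((n + 1 - k) * (n - k * (k - 1))) ≤ 0 := by
    linear_combination (k * n : ℤ) * hcount + (k : ℤ) * hCS - (n * r : ℤ) * hN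
  have h₁ : (0 : ℤ) < n + 1 - k := by nlinarith
  have h₂ : (0 : ℤ) < n - k * (k - 1) := by linarith
  have : 0 < (r : ℤ) ^ 2 * ((n + 1 - k) * (n - k * (k - 1))) := by positivity
  linarith

/- Equality holds for the lines of a projective plane of order `k - 1`. -/
theorem card_le_sq_sub_add_one {O : Finset α} {k r : ℕ} (hr : 0 < r) (hB : ∀ i, B i ⊆ O)
    (hk : ∀ i, #(B i) = k) (hdeg : ∀ z ∈ O, degree B z = r)
    (hinter : ∀ i j, (B i ∩ B j).Nonempty) : #O ≤ k ^ 2 - k + 1 := by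
  obtain rfl | ⟨z, hz⟩ := O.eq_empty_or_nonempty
  · simp
  rw [← card_erase_add_one hz]
  refine add_one_le_sq_sub_add_one hr ?_ ?_
    (card_filter_notMem_mul_add_sum_sq_le hB hdeg hinter hz) (sq_sum_le_card_mul_sum_sq ..)
  · rw [card_erase_add_one hz, ← card_mul_eq_card_mul_of_regular hB hk hdeg, ← hdeg z hz, degree,
      card_filter_add_card_filter_not, card_univ]
  · rw [← hdeg z hz, ← sum_codegree hB hk z, ← add_sum_erase _ _ hz, codegree_self, add_comm]

end Family

section GroupAction

open MulAction
open scoped Pointwise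

variable {G Ω : Type*} [Group G] [MulAction G Ω] [DecidableEq Ω]

theorem smul_finset_inter_nonempty {Γ : Finset Ω} (h : ∀ g : G, ∃ x ∈ Γ, g • x ∈ Γ) (g g' : G) :
    (g • Γ ∩ g' • Γ).Nonempty := by
  obtain ⟨x, hx, hgx⟩ := h (g'⁻¹ * g)
  refine ⟨g • x, mem_inter.2 ⟨smul_mem_smul_finset hx, ?_⟩⟩
  simpa [mul_smul] using smul_mem_smul_finset (a := g') hgx

variable [Fintype G]

theorem degree_smul_finset_smul (Γ : Finset Ω) (h : G) (z : Ω) :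
    degree (fun g : G => g • Γ) (h • z) = degree (fun g : G => g • Γ) z := by
  refine (card_equiv (Equiv.mulLeft h) fun g => ?_).symm
  simp [mul_smul, smul_mem_smul_finset_iff]

theorem card_orbit_le_of_forall_mem_orbit {Γ : Finset Ω} {x : Ω} (hx : x ∈ Γ)
    (hΓ : ∀ y ∈ Γ, y ∈ orbit G x) (h : ∀ g : G, ∃ y ∈ Γ, g • y ∈ Γ) :
    Nat.card (orbit G x) ≤ #Γ ^ 2 - #Γ + 1 := by
  have horbit : Nat.card (orbit G x) = #(univ.image fun g : G => g • x) := by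
    rw [← Set.ncard_coe_finset, coe_image, coe_univ, Set.image_univ, Nat.card_coe_set_eq]
    rfl
  rw [horbit]
  refine card_le_sq_sub_add_one (B := fun g : G => g • Γ) (r := degree (fun g : G => g • Γ) x)
    (card_pos.2 ⟨1, by simpa using hx⟩) (fun g y hy => ?_) (fun g => card_smul_finset g Γ)
    (fun z hz => ?_) (smul_finset_inter_nonempty h)
  · obtain ⟨y, hyΓ, rfl⟩ := mem_smul_finset.1 hy
    obtain ⟨g', rfl⟩ := hΓ y hyΓ
    exact mem_image.2 ⟨g * g', mem_univ _, mul_smul g g' x⟩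
  · obtain ⟨g, -, rfl⟩ := mem_image.1 hz
    exact degree_smul_finset_smul Γ g x

open scoped Classical in
theorem card_filter_smul_mem (x : Ω) (S : Finset Ω) :
    #{g : G | g • x ∈ S} = #{y ∈ S | y ∈ orbit G x} * #{g : G | g • x = x} := by
  rw [card_eq_sum_card_fiberwise (f := (· • x)) (t := {y ∈ S | y ∈ orbit G x})]
  · refine sum_const_nat fun y hy => ?_
    obtain ⟨hyS, h, rfl⟩ := mem_filter.1 hy
    rw [filter_filter]
    refine (card_equiv (Equiv.mulLeft h) fun g => ?_).symm
    simp only [mem_filter, mem_univ, true_and, Equiv.coe_mulLeft, mul_smul, smul_left_cancel_iff]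
    exact ⟨fun hg => ⟨by rwa [hg], hg⟩, And.right⟩
  · exact fun g hg => mem_filter.2 ⟨(mem_filter.1 hg).2, mem_orbit x g⟩

theorem card_orbit_mul_card_filter_smul_eq (x : Ω) :
    Nat.card (orbit G x) * #{g : G | g • x = x} = Fintype.card G := by
  rw [Nat.card_coe_set_eq, ← index_stabilizer, ← Nat.card_eq_fintype_card,
    ← (stabilizer G x).card_mul_index, mul_comm, Nat.card_eq_fintype_card, Fintype.card_subtype]
  simp

open scoped Classical in
theorem exists_card_orbit_le_card_mul_card_filter {Γ : Finset Ω}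
    (h : ∀ g : G, ∃ x ∈ Γ, g • x ∈ Γ) :
    ∃ x ∈ Γ, Nat.card (orbit G x) ≤ #Γ * #{y ∈ Γ | y ∈ orbit G x} := by
  by_contra! hlt
  have hcover : Fintype.card G ≤ ∑ x ∈ Γ, #{g : G | g • x ∈ Γ} :=
    calc Fintype.card G ≤ #(Γ.biUnion fun x => {g : G | g • x ∈ Γ}) := by
          rw [← card_univ]
          refine card_le_card fun g _ => ?_
          obtain ⟨x, hx, hgx⟩ := h g
          exact mem_biUnion.2 ⟨x, hx, by simpa using hgx⟩
      _ ≤ _ := card_biUnion_le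
  have hsmall : ∀ x ∈ Γ, #Γ * #{g : G | g • x ∈ Γ} < Fintype.card G := by
    intro x hx
    have hstab : 0 < #{g : G | g • x = x} := card_pos.2 ⟨1, by simp⟩
    rw [card_filter_smul_mem, ← mul_assoc, ← card_orbit_mul_card_filter_smul_eq x]
    exact Nat.mul_lt_mul_of_pos_right (hlt x hx) hstab
  obtain ⟨x₀, hx₀, -⟩ := h 1
  have key : Fintype.card G * #Γ < Fintype.card G * #Γ :=
    calc Fintype.card G * #Γ ≤ ∑ x ∈ Γ, #Γ * #{g : G | g • x ∈ Γ} := by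
          rw [← mul_sum, mul_comm]
          exact Nat.mul_le_mul_left _ hcover
      _ < ∑ x ∈ Γ, Fintype.card G := sum_lt_sum_of_nonempty ⟨x₀, hx₀⟩ hsmall
      _ = Fintype.card G * #Γ := by rw [sum_const, smul_eq_mul, mul_comm]
  exact lt_irrefl _ key

end GroupAction

end RestrictedMovement

open RestrictedMovement in
/-- The Neumann–Praeger restricted movement theorem: if `Γ` is a `k`-subset of `Ω`
such that no element of `G` moves `Γ` completely off itself, then `Γ` meets a
`G`-orbit of length at most `k² − k + 1`. -/
theorem stmt17 {G Ω : Type*} [Group G] [MulAction G Ω] [FaithfulSMul G Ω] [Finite Ω]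
    (k : ℕ) (Γ : Finset Ω) (hΓ : Γ.card = k)
    (h : ∀ g : G, ∃ x ∈ Γ, g • x ∈ Γ) :
    ∃ x ∈ Γ, Nat.card (MulAction.orbit G x) ≤ k ^ 2 - k + 1 := by
  classical
  have : Finite G := Finite.of_injective _ (MulAction.toPerm_injective (α := G) (β := Ω))
  have : Fintype G := Fintype.ofFinite G
  subst hΓ
  obtain ⟨x₀, hx₀, -⟩ := h 1
  by_cases hsingle : ∀ y ∈ Γ, y ∈ MulAction.orbit G x₀
  · exact ⟨x₀, hx₀, card_orbit_le_of_forall_mem_orbit hx₀ hsingle h⟩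
  obtain ⟨x, hx, hle⟩ := exists_card_orbit_le_card_mul_card_filter h
  obtain ⟨y, hy, hyx⟩ : ∃ y ∈ Γ, y ∉ MulAction.orbit G x := by
    by_contra! hall
    exact hsingle fun y hy => MulAction.orbit_eq_iff.2 (hall x₀ hx₀) ▸ hall y hy
  have hmiss : #{z ∈ Γ | z ∈ MulAction.orbit G x} ≤ #Γ - 1 :=
    Nat.le_sub_one_of_lt (card_lt_card (filter_ssubset.2 ⟨y, hy, hyx⟩))
  refine ⟨x, hx, hle.trans ?_⟩
  calc #Γ * #{z ∈ Γ | z ∈ MulAction.orbit G x} ≤ #Γ * (#Γ - 1) := Nat.mul_le_mul_left _ hmiss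
    _ ≤ #Γ ^ 2 - #Γ + 1 := by rw [Nat.mul_sub_one, ← sq]; exact Nat.le_succ _
end
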